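/- For natural numbers N ≥ 1 and d ≥ 1, define C_{N-1,j} = ∑_{m=j}^{N-1} 2^{-m} C(d-1+m, d-1+j) for 0 ≤ j ≤ N-1. Then ∑_{j=0}^{N-1} (-1)^j C_{N-1,j} · #{k ∈ ℕ^d : |k| = j} = ∑_{j=0}^{N-1} (-1)^j C_{N-1,j} · C(j+d-1, d-1) = 1. -/

import Mathlib

/-!
After exchanging the two sums, the identity `C(e+m, e+j) C(e+j, e) = C(e+m, e) C(m, j)`
(with `e = d - 1`) factors out the alternating binomial sum `∑ⱼ (-1)ʲ C(m, j) = 0 ^ m`, so only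
the term `m = 0` survives, whatever the weights `2⁻ᵐ` are.
-/

open Finset

/-- The spectrogram-expansion coefficients `C_{N-1,j}` in dimension `d`. -/
noncomputable def specCoeff (d N j : ℕ) : ℝ :=
  ∑ m ∈ Finset.Icc j (N - 1), ((2 : ℝ) ^ m)⁻¹ * ((d - 1 + m).choose (d - 1 + j))

theorem Finset.Nat.card_antidiagonalTuple (k n : ℕ) :
    #(Finset.Nat.antidiagonalTuple k n) = (k + n - 1).choose n := by
  calc #(Finset.Nat.antidiagonalTuple k n)
      = #((univ : Finset (Fin k)).finsuppAntidiag n) :=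
        card_nbij' Finsupp.equivFunOnFinite.symm (⇑)
          (fun _ hf ↦ by simpa [Finset.Nat.mem_antidiagonalTuple] using hf)
          (fun _ hf ↦ by simpa [Finset.Nat.mem_antidiagonalTuple] using hf)
          (fun _ _ ↦ rfl) (fun f _ ↦ Finsupp.equivFunOnFinite_symm_coe f)
    _ = (k + n - 1).choose n := by simp [card_finsuppAntidiag_nat_eq_choose]

theorem Nat.choose_add_mul_choose_add (e j m : ℕ) :
    (e + m).choose (e + j) * (e + j).choose e = (e + m).choose e * m.choose j := by
  simpa using Nat.choose_mul (n := e + m) (k := e + j) (s := e) (by omega)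

theorem sum_range_neg_one_pow_mul_choose {R : Type*} [CommRing R] (m : ℕ) :
    ∑ j ∈ range (m + 1), (-1 : R) ^ j * m.choose j = 0 ^ m := by
  simpa using (add_pow (-1 : R) 1 m).symm

theorem sum_range_neg_one_pow_mul_sum_Icc_choose {R : Type*} [CommRing R] (w : ℕ → R)
    (e n : ℕ) :
    ∑ j ∈ range (n + 1), (-1) ^ j * (∑ m ∈ Icc j n, w m * ((e + m).choose (e + j) : R)) *
      ((e + j).choose e : R) = w 0 := by
  calc _ = ∑ m ∈ range (n + 1), ∑ j ∈ range (m + 1),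
          (-1) ^ j * (w m * ((e + m).choose (e + j) : R)) * ((e + j).choose e : R) := by
        simp only [mul_sum, sum_mul]
        exact sum_comm' fun j m ↦ by simp only [mem_range, mem_Icc]; omega
    _ = ∑ m ∈ range (n + 1), w m * ((e + m).choose e : R) *
          ∑ j ∈ range (m + 1), (-1 : R) ^ j * m.choose j := by
        refine sum_congr rfl fun m _ ↦ ?_
        rw [mul_sum]
        refine sum_congr rfl fun j _ ↦ ?_
        have := congrArg (Nat.cast (R := R)) (Nat.choose_add_mul_choose_add e j m)
        push_cast at this
        linear_combination (-1 : R) ^ j * w m * this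
    _ = w 0 := by
        simp only [sum_range_neg_one_pow_mul_choose]
        rw [sum_range_succ']
        simp

theorem stmt15 (N d : ℕ) (hN : 1 ≤ N) (hd : 1 ≤ d) :
    (∑ j ∈ Finset.range N, (-1 : ℝ) ^ j * specCoeff d N j *
        ((Finset.Nat.antidiagonalTuple d j).card : ℝ)
      = ∑ j ∈ Finset.range N, (-1 : ℝ) ^ j * specCoeff d N j *
        (((j + d - 1).choose (d - 1) : ℕ) : ℝ)) ∧
    (∑ j ∈ Finset.range N, (-1 : ℝ) ^ j * specCoeff d N j *
        (((j + d - 1).choose (d - 1) : ℕ) : ℝ) = 1) := by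
  obtain ⟨n, rfl⟩ := Nat.exists_eq_add_of_le' hN
  obtain ⟨e, rfl⟩ := Nat.exists_eq_add_of_le' hd
  have hcard (j : ℕ) : #(Finset.Nat.antidiagonalTuple (e + 1) j) = (e + j).choose e := by
    rw [Finset.Nat.card_antidiagonalTuple, Nat.add_right_comm, Nat.add_sub_cancel,
      Nat.choose_symm_add]
  have hshift (j : ℕ) : j + (e + 1) - 1 = e + j := by omega
  simp only [hcard, hshift, Nat.add_sub_cancel, true_and, specCoeff]
  simpa using sum_range_neg_one_pow_mul_sum_Icc_choose (fun m ↦ ((2 : ℝ) ^ m)⁻¹) e n
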